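/- arXiv:2007.09444 — 2 statements merged into one kernel-verified Lean document; each statement's English description precedes it below -/
import Mathlib

section
/- Let ((D_{-1}; A_{-1}, B; M), (D_0; A_0, B; M)) be a VB-Lie 2-algebroid with Lie 2-algebroid structure (D_{-1}^B, D_0^B, a, l_1, l_2, l_3). Then (A_{-1}, A_0, 𝔞, 𝔩_1, 𝔩_2, 𝔩_3) is a Lie 2-algebroid, where 𝔞: A_0 → TM and 𝔩_1: A_{-1} → A_0 are the side maps over which a and l_1 are double vector bundle morphisms, 𝔩_2 is the well-defined operation determined by: if ξ⁰_1, ξ⁰_2, ξ⁰ ∈ Γ_B^l(D_0) are linear sections over X⁰_1, X⁰_2, X⁰ ∈ Γ(A_0) and ξ¹ ∈ Γ_B^l(D_{-1}) is a linear section over X¹ ∈ Γ(A_{-1}), then l_2(ξ⁰_1, ξ⁰_2) is linear over 𝔩_2(X⁰_1, X⁰_2) and l_2(ξ⁰, ξ¹) is linear over 𝔩_2(X⁰, X¹); and 𝔩_3 is the well-defined operation determined by: l_3(ξ⁰_1, ξ⁰_2, ξ⁰_3) is linear over 𝔩_3(X⁰_1, X⁰_2, X⁰_3). -/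
/-!  A split Lie 2-algebroid, in algebraic (Lie–Rinehart) form.

The commutative `ℝ`-algebra `R` plays the role of the algebra of smooth
functions `C^∞(M)` on the base manifold `M`; vector fields on `M` are
`Derivation ℝ R R`; (sections of) vector bundles over `M` are `R`-modules.
A split Lie 2-algebroid `(A₋₁, A₀, 𝔞, 𝔩₁, 𝔩₂, 𝔩₃)` consists of an anchor
`𝔞 : A₀ → TM`, a degree 1 map `𝔩₁ : A₋₁ → A₀`, a bracket `𝔩₂` (with
components `l20 : A₀ × A₀ → A₀` and `l21 : A₀ × A₋₁ → A₋₁`, the remaining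
component being zero for degree reasons) and `𝔩₃ : ∧³A₀ → A₋₁`, such that
the section space is a 2-term L∞-algebra, `𝔩₂` satisfies the Leibniz rule
with respect to the anchor, and `𝔩₁, 𝔩₃` are `C^∞(M)`-linear. -/
structure Lie2Algebroid (R : Type*) [CommRing R] [Algebra ℝ R]
    (A1 A0 : Type*)
    [AddCommGroup A1] [Module ℝ A1] [Module R A1] [IsScalarTower ℝ R A1]
    [AddCommGroup A0] [Module ℝ A0] [Module R A0] [IsScalarTower ℝ R A0] : Type _ where
  /-- the anchor `𝔞 : A₀ → TM` (a bundle map, i.e. `R`-linear) -/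
  anchor : A0 →ₗ[R] Derivation ℝ R R
  /-- `𝔩₁ : A₋₁ → A₀` (`C^∞(M)`-linear) -/
  l1 : A1 →ₗ[R] A0
  /-- the degree 0 component of `𝔩₂` -/
  l20 : A0 →ₗ[ℝ] A0 →ₗ[ℝ] A0
  /-- the degree −1 component of `𝔩₂` -/
  l21 : A0 →ₗ[ℝ] A1 →ₗ[ℝ] A1
  /-- `𝔩₃ : ∧³ A₀ → A₋₁` (`C^∞(M)`-trilinear) -/
  l3 : A0 →ₗ[R] A0 →ₗ[R] A0 →ₗ[R] A1
  l20_skew : ∀ x y, l20 x y = - l20 y x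
  l3_skew12 : ∀ x y z, l3 x y z = - l3 y x z
  l3_skew23 : ∀ x y z, l3 x y z = - l3 x z y
  /-- Leibniz rule for `𝔩₂` with respect to the anchor -/
  leib20 : ∀ (x y : A0) (f : R), l20 x (f • y) = f • l20 x y + anchor x f • y
  /-- Leibniz rule for `𝔩₂` with respect to the anchor -/
  leib21 : ∀ (x : A0) (a : A1) (f : R), l21 x (f • a) = f • l21 x a + anchor x f • a
  /-- `𝔩₂(f·X⁰, X¹) = f·𝔩₂(X⁰, X¹)` (the anchor vanishes on `A₋₁`) -/
  l21_smul_left : ∀ (f : R) (x : A0) (a : A1), l21 (f • x) a = f • l21 x a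
  anchor_l1 : ∀ a : A1, anchor (l1 a) = 0
  anchor_l20 : ∀ x y, anchor (l20 x y) = ⁅anchor x, anchor y⁆
  l1_l21 : ∀ x a, l1 (l21 x a) = l20 x (l1 a)
  l21_l1 : ∀ a b, l21 (l1 a) b = - l21 (l1 b) a
  /-- the Jacobi identity up to the homotopy `𝔩₃` -/
  jacobi : ∀ x y z,
    l20 (l20 x y) z + l20 (l20 y z) x + l20 (l20 z x) y = - l1 (l3 x y z)
  /-- the mixed Jacobi identity up to the homotopy `𝔩₃` -/
  jacobi1 : ∀ x y a,
    l21 x (l21 y a) - l21 y (l21 x a) - l21 (l20 x y) a = l3 x y (l1 a)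
  /-- the higher coherence identity for `𝔩₃` -/
  coherence : ∀ x1 x2 x3 x4,
    l21 x1 (l3 x2 x3 x4) - l21 x2 (l3 x1 x3 x4) + l21 x3 (l3 x1 x2 x4)
      - l21 x4 (l3 x1 x2 x3)
    = l3 (l20 x1 x2) x3 x4 - l3 (l20 x1 x3) x2 x4 + l3 (l20 x1 x4) x2 x3
      + l3 (l20 x2 x3) x1 x4 - l3 (l20 x2 x4) x1 x3 + l3 (l20 x3 x4) x1 x2
/-!  A VB-Lie 2-algebroid, in algebraic form.

A graded double vector bundle `((D₋₁; A₋₁, B; M), (D₀; A₀, B; M))` with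
cores `C₋₁, C₀` is encoded through its *graded fat bundle*: the `R`-module
`F₀` (resp. `F₁`) of linear sections of `D₀ → B` (resp. of `D₋₁ → B`)
together with the exact sequences
`0 → Hom(B, C₀) → F₀ → A₀ → 0` and `0 → Hom(B, C₋₁) → F₋₁ → A₋₁ → 0`,
and the core sections `C₀`, `C₋₁`.  A VB-Lie 2-algebroid structure is a
Lie 2-algebroid structure `(D₋₁ᴮ, D₀ᴮ, a, l₁, l₂, l₃)` on `D₀ ⊕ D₋₁` over
`B` such that the anchor `a : D₀ → TB` and `l₁ : D₋₁ → D₀` are double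
vector bundle morphisms (over `𝔞 : A₀ → TM` and `𝔩₁ : A₋₁ → A₀`) and
`l₂, l₃` are linear: they preserve linear sections, send a linear and a
core section to a core section, and vanish on two core sections.  The
anchor restricted to linear sections is recorded as the covariant
differential operator `aop ξ : Γ(B) → Γ(B)` with symbol `𝔞(pr₀ ξ)`, and
its core part is the bundle map `ϱ : C₀ → B`. -/
structure VBLie2Algebroid (R : Type*) [CommRing R] [Algebra ℝ R]
    (A1 A0 B C1 C0 F1 F0 : Type*)
    [AddCommGroup A1] [Module ℝ A1] [Module R A1] [IsScalarTower ℝ R A1]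
    [AddCommGroup A0] [Module ℝ A0] [Module R A0] [IsScalarTower ℝ R A0]
    [AddCommGroup B] [Module ℝ B] [Module R B] [IsScalarTower ℝ R B]
    [AddCommGroup C1] [Module ℝ C1] [Module R C1] [IsScalarTower ℝ R C1]
    [AddCommGroup C0] [Module ℝ C0] [Module R C0] [IsScalarTower ℝ R C0]
    [AddCommGroup F1] [Module ℝ F1] [Module R F1] [IsScalarTower ℝ R F1]
    [AddCommGroup F0] [Module ℝ F0] [Module R F0] [IsScalarTower ℝ R F0] :
    Type _ where
  /- the two exact sequences `0 → B*⊗C₋ᵢ → Âᵢ → Aᵢ → 0` of fat bundles -/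
  iota0 : (B →ₗ[R] C0) →ₗ[R] F0
  pr0 : F0 →ₗ[R] A0
  iota0_inj : Function.Injective iota0
  pr0_surj : Function.Surjective pr0
  exact0 : LinearMap.range iota0 = LinearMap.ker pr0
  iota1 : (B →ₗ[R] C1) →ₗ[R] F1
  pr1 : F1 →ₗ[R] A1
  iota1_inj : Function.Injective iota1
  pr1_surj : Function.Surjective pr1
  exact1 : LinearMap.range iota1 = LinearMap.ker pr1
  /-- the side anchor `𝔞 : A₀ → TM` -/
  sideAnchor : A0 →ₗ[R] Derivation ℝ R R
  /-- the core part `ϱ : C₀ → B` of the anchor `a : D₀ → TB` -/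
  varrho : C0 →ₗ[R] B
  /-- the anchor `a : D₀ → TB` on a linear section `ξ` is the linear vector
  field on `B` given by the covariant differential operator `aop ξ` on
  `Γ(B)` with symbol `𝔞(pr₀ ξ)` -/
  aop : F0 → B →ₗ[ℝ] B
  aop_add : ∀ ξ η, aop (ξ + η) = aop ξ + aop η
  aop_smul : ∀ (f : R) (ξ : F0) (b : B), aop (f • ξ) b = f • aop ξ b
  aop_leibniz : ∀ (ξ : F0) (f : R) (b : B),
    aop ξ (f • b) = f • aop ξ b + sideAnchor (pr0 ξ) f • b
  /-- the anchor is a double vector bundle morphism: on a section of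
  `B* ⊗ C₀` it is the vertical lift determined by `ϱ` -/
  aop_iota : ∀ (φ : B →ₗ[R] C0) (b : B), aop (iota0 φ) b = varrho (φ b)
  /-- the side map `𝔩₁ : A₋₁ → A₀` -/
  sidel1 : A1 →ₗ[R] A0
  /-- the core map `l₁ᶜ : C₋₁ → C₀` of `l₁` -/
  l1C : C1 →ₗ[R] C0
  /-- `l₁` restricted to linear sections -/
  lhat1 : F1 →ₗ[R] F0
  /-- `l₁ : D₋₁ → D₀` is a double vector bundle morphism over `𝔩₁` -/
  lhat1_pr : ∀ ξ, pr0 (lhat1 ξ) = sidel1 (pr1 ξ)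
  lhat1_iota : ∀ φ : B →ₗ[R] C1, lhat1 (iota1 φ) = iota0 (l1C.comp φ)
  sideAnchor_sidel1 : ∀ a : A1, sideAnchor (sidel1 a) = 0
  /- `l₂` on two linear sections is linear -/
  lam00 : F0 →ₗ[ℝ] F0 →ₗ[ℝ] F0
  lam01 : F0 →ₗ[ℝ] F1 →ₗ[ℝ] F1
  /- `l₂` of a linear and a core section is a core section: -/
  /-- `∇⁰ : Γ^l(D₀) × Γ(C₀) → Γ(C₀)`, `∇⁰_ξ c = l₂(ξ, c†)` -/
  nabla0 : F0 →ₗ[ℝ] C0 →ₗ[ℝ] C0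
  /-- `∇¹ : Γ^l(D₀) × Γ(C₋₁) → Γ(C₋₁)`, `∇¹_ξ c = l₂(ξ, c†)` -/
  nabla1 : F0 →ₗ[ℝ] C1 →ₗ[ℝ] C1
  /-- `ν : Γ^l(D₋₁) × Γ(C₀) → Γ(C₋₁)`, `ν_η c = l₂(η, c†)` -/
  nu : F1 →ₗ[R] C0 →ₗ[R] C1
  /- `l₃` on three linear sections is linear, and is a core section if one
  argument is a core section -/
  lam3 : F0 →ₗ[R] F0 →ₗ[R] F0 →ₗ[R] F1
  /-- `l₃` of two linear sections and a core section, `lam3c ξ η c = l₃(ξ, η, c†)` -/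
  lam3c : F0 →ₗ[R] F0 →ₗ[R] C0 →ₗ[R] C1
  /- The Lie 2-algebroid axioms for `(Γ^l(D₋₁), Γ^l(D₀))` over `B`,
  with anchor `𝔞 ∘ pr₀` on `M`-coefficients: -/
  lam00_skew : ∀ ξ η, lam00 ξ η = - lam00 η ξ
  lam3_skew12 : ∀ ξ η ζ, lam3 ξ η ζ = - lam3 η ξ ζ
  lam3_skew23 : ∀ ξ η ζ, lam3 ξ η ζ = - lam3 ξ ζ η
  leib_lam00 : ∀ (ξ η : F0) (f : R),
    lam00 ξ (f • η) = f • lam00 ξ η + sideAnchor (pr0 ξ) f • η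
  leib_lam01 : ∀ (ξ : F0) (η : F1) (f : R),
    lam01 ξ (f • η) = f • lam01 ξ η + sideAnchor (pr0 ξ) f • η
  lam01_smul_left : ∀ (f : R) (ξ : F0) (η : F1), lam01 (f • ξ) η = f • lam01 ξ η
  anchor_lam00 : ∀ ξ η,
    sideAnchor (pr0 (lam00 ξ η)) = ⁅sideAnchor (pr0 ξ), sideAnchor (pr0 η)⁆
  lhat1_lam01 : ∀ ξ η, lhat1 (lam01 ξ η) = lam00 ξ (lhat1 η)
  lam01_lhat1 : ∀ η η', lam01 (lhat1 η) η' = - lam01 (lhat1 η') η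
  jacobi_fat : ∀ ξ η ζ,
    lam00 (lam00 ξ η) ζ + lam00 (lam00 η ζ) ξ + lam00 (lam00 ζ ξ) η
      = - lhat1 (lam3 ξ η ζ)
  jacobi1_fat : ∀ ξ η θ,
    lam01 ξ (lam01 η θ) - lam01 η (lam01 ξ θ) - lam01 (lam00 ξ η) θ
      = lam3 ξ η (lhat1 θ)
  coherence_fat : ∀ ξ1 ξ2 ξ3 ξ4,
    lam01 ξ1 (lam3 ξ2 ξ3 ξ4) - lam01 ξ2 (lam3 ξ1 ξ3 ξ4)
      + lam01 ξ3 (lam3 ξ1 ξ2 ξ4) - lam01 ξ4 (lam3 ξ1 ξ2 ξ3)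
    = lam3 (lam00 ξ1 ξ2) ξ3 ξ4 - lam3 (lam00 ξ1 ξ3) ξ2 ξ4
      + lam3 (lam00 ξ1 ξ4) ξ2 ξ3 + lam3 (lam00 ξ2 ξ3) ξ1 ξ4
      - lam3 (lam00 ξ2 ξ4) ξ1 ξ3 + lam3 (lam00 ξ3 ξ4) ξ1 ξ2
  /- linearity of `l₂`, `l₃`: the brackets descend to the side bundles -/
  pr0_lam00_iota : ∀ (φ : B →ₗ[R] C0) (η : F0), pr0 (lam00 (iota0 φ) η) = 0
  pr1_lam01_iota0 : ∀ (φ : B →ₗ[R] C0) (η : F1), pr1 (lam01 (iota0 φ) η) = 0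
  pr1_lam01_iota1 : ∀ (ξ : F0) (ψ : B →ₗ[R] C1), pr1 (lam01 ξ (iota1 ψ)) = 0
  pr1_lam3_iota : ∀ (φ : B →ₗ[R] C0) (η ζ : F0), pr1 (lam3 (iota0 φ) η ζ) = 0
  /- compatibility of the brackets with core sections (linearity of `l₂`
  expressed on sections of `B*⊗C`): -/
  lam00_iota : ∀ (ξ : F0) (ψ : B →ₗ[R] C0), ∃ χ : B →ₗ[R] C0,
    (∀ b, χ b = nabla0 ξ (ψ b) - ψ (aop ξ b)) ∧ lam00 ξ (iota0 ψ) = iota0 χ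
  lam01_iota1 : ∀ (ξ : F0) (ψ : B →ₗ[R] C1), ∃ χ : B →ₗ[R] C1,
    (∀ b, χ b = nabla1 ξ (ψ b) - ψ (aop ξ b)) ∧ lam01 ξ (iota1 ψ) = iota1 χ
  lam01_iota0 : ∀ (φ : B →ₗ[R] C0) (η : F1), ∃ χ : B →ₗ[R] C1,
    (∀ b, χ b = - nu η (φ b)) ∧ lam01 (iota0 φ) η = iota1 χ
  lam3_iota : ∀ (ξ η : F0) (φ : B →ₗ[R] C0), ∃ χ : B →ₗ[R] C1,
    (∀ b, χ b = lam3c ξ η (φ b)) ∧ lam3 ξ η (iota0 φ) = iota1 χ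
  /- Leibniz rules and linearity for the core operations -/
  nabla0_leibniz : ∀ (ξ : F0) (f : R) (c : C0),
    nabla0 ξ (f • c) = f • nabla0 ξ c + sideAnchor (pr0 ξ) f • c
  nabla0_smul : ∀ (f : R) (ξ : F0) (c : C0), nabla0 (f • ξ) c = f • nabla0 ξ c
  nabla0_iota : ∀ (φ : B →ₗ[R] C0) (c : C0), nabla0 (iota0 φ) c = φ (varrho c)
  nabla1_leibniz : ∀ (ξ : F0) (f : R) (c : C1),
    nabla1 ξ (f • c) = f • nabla1 ξ c + sideAnchor (pr0 ξ) f • c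
  nabla1_smul : ∀ (f : R) (ξ : F0) (c : C1), nabla1 (f • ξ) c = f • nabla1 ξ c
  nabla1_iota : ∀ (φ : B →ₗ[R] C0) (c : C1), nabla1 (iota0 φ) c = 0
  nu_iota : ∀ (ψ : B →ₗ[R] C1) (c : C0), nu (iota1 ψ) c = ψ (varrho c)
  lam3c_skew : ∀ ξ η c, lam3c ξ η c = - lam3c η ξ c
  lam3c_iota : ∀ (φ : B →ₗ[R] C0) (η : F0) (c : C0), lam3c (iota0 φ) η c = 0

variable {R : Type*} [CommRing R] [Algebra ℝ R]
variable {A1 A0 B C1 C0 F1 F0 : Type*}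
  [AddCommGroup A1] [Module ℝ A1] [Module R A1] [IsScalarTower ℝ R A1]
  [AddCommGroup A0] [Module ℝ A0] [Module R A0] [IsScalarTower ℝ R A0]
  [AddCommGroup B] [Module ℝ B] [Module R B] [IsScalarTower ℝ R B]
  [AddCommGroup C1] [Module ℝ C1] [Module R C1] [IsScalarTower ℝ R C1]
  [AddCommGroup C0] [Module ℝ C0] [Module R C0] [IsScalarTower ℝ R C0]
  [AddCommGroup F1] [Module ℝ F1] [Module R F1] [IsScalarTower ℝ R F1]
  [AddCommGroup F0] [Module ℝ F0] [Module R F0] [IsScalarTower ℝ R F0]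

/-- **Theorem (side bundle of a VB-Lie 2-algebroid).**
Let `((D₋₁; A₋₁, B; M), (D₀; A₀, B; M))` be a VB-Lie 2-algebroid with Lie
2-algebroid structure `(D₋₁ᴮ, D₀ᴮ, a, l₁, l₂, l₃)`.  Then
`(A₋₁, A₀, 𝔞, 𝔩₁, 𝔩₂, 𝔩₃)` is a Lie 2-algebroid, where `𝔞` and `𝔩₁` are the
side maps over which `a` and `l₁` are double vector bundle morphisms, and
`𝔩₂`, `𝔩₃` are the (well-defined) operations determined by the property
that for linear sections `ξ⁰ᵢ, ξ⁰` over `X⁰ᵢ, X⁰ ∈ Γ(A₀)` and `ξ¹` over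
`X¹ ∈ Γ(A₋₁)`, the section `l₂(ξ⁰₁, ξ⁰₂)` is linear over `𝔩₂(X⁰₁, X⁰₂)`,
`l₂(ξ⁰, ξ¹)` is linear over `𝔩₂(X⁰, X¹)`, and `l₃(ξ⁰₁, ξ⁰₂, ξ⁰₃)` is
linear over `𝔩₃(X⁰₁, X⁰₂, X⁰₃)`. -/
theorem side_of_VBLie2Algebroid
    (V : VBLie2Algebroid R A1 A0 B C1 C0 F1 F0) :
    ∃ L : Lie2Algebroid R A1 A0,
      L.anchor = V.sideAnchor ∧ L.l1 = V.sidel1 ∧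
      (∀ ξ1 ξ2 : F0, V.pr0 (V.lam00 ξ1 ξ2) = L.l20 (V.pr0 ξ1) (V.pr0 ξ2)) ∧
      (∀ (ξ : F0) (η : F1), V.pr1 (V.lam01 ξ η) = L.l21 (V.pr0 ξ) (V.pr1 η)) ∧
      (∀ ξ1 ξ2 ξ3 : F0,
        V.pr1 (V.lam3 ξ1 ξ2 ξ3) = L.l3 (V.pr0 ξ1) (V.pr0 ξ2) (V.pr0 ξ3)) := by
  classical
  obtain ⟨s0, hs0⟩ := (V.pr0.restrictScalars ℝ).exists_rightInverse_of_surjective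
    (LinearMap.range_eq_top.2 V.pr0_surj)
  obtain ⟨s1, hs1⟩ := (V.pr1.restrictScalars ℝ).exists_rightInverse_of_surjective
    (LinearMap.range_eq_top.2 V.pr1_surj)
  have Hs0 : ∀ x, V.pr0 (s0 x) = x := fun x => by
    simpa using LinearMap.ext_iff.1 hs0 x
  have Hs1 : ∀ x, V.pr1 (s1 x) = x := fun x => by
    simpa using LinearMap.ext_iff.1 hs1 x
  have mem0 : ∀ δ : F0, V.pr0 δ = 0 → ∃ φ, δ = V.iota0 φ := by
    intro δ h
    have hh : δ ∈ LinearMap.range V.iota0 := V.exact0 ▸ LinearMap.mem_ker.2 h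
    obtain ⟨φ, hφ⟩ := hh
    exact ⟨φ, hφ.symm⟩
  have mem1 : ∀ δ : F1, V.pr1 δ = 0 → ∃ ψ, δ = V.iota1 ψ := by
    intro δ h
    have hh : δ ∈ LinearMap.range V.iota1 := V.exact1 ▸ LinearMap.mem_ker.2 h
    obtain ⟨ψ, hψ⟩ := hh
    exact ⟨ψ, hψ.symm⟩
  have z00l : ∀ (δ η : F0), V.pr0 δ = 0 → V.pr0 (V.lam00 δ η) = 0 := by
    intro δ η h; obtain ⟨φ, rfl⟩ := mem0 δ h; exact V.pr0_lam00_iota φ η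
  have z00r : ∀ (ξ δ : F0), V.pr0 δ = 0 → V.pr0 (V.lam00 ξ δ) = 0 := by
    intro ξ δ h; rw [V.lam00_skew, map_neg, z00l δ ξ h, neg_zero]
  have K00 : ∀ ξ ξ' η η' : F0, V.pr0 ξ = V.pr0 ξ' → V.pr0 η = V.pr0 η' →
      V.pr0 (V.lam00 ξ η) = V.pr0 (V.lam00 ξ' η') := by
    intro ξ ξ' η η' h1 h2
    have e : V.lam00 ξ' η' = V.lam00 ξ η + (V.lam00 (ξ' - ξ) η' + V.lam00 ξ (η' - η)) := by
      simp only [map_sub, LinearMap.sub_apply]; abel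
    rw [e, map_add, map_add, z00l (ξ' - ξ) η' (by rw [map_sub, h1, sub_self]),
      z00r ξ (η' - η) (by rw [map_sub, h2, sub_self]), add_zero, add_zero]
  have z01l : ∀ (δ : F0) (η : F1), V.pr0 δ = 0 → V.pr1 (V.lam01 δ η) = 0 := by
    intro δ η h; obtain ⟨φ, rfl⟩ := mem0 δ h; exact V.pr1_lam01_iota0 φ η
  have z01r : ∀ (ξ : F0) (δ : F1), V.pr1 δ = 0 → V.pr1 (V.lam01 ξ δ) = 0 := by
    intro ξ δ h; obtain ⟨ψ, rfl⟩ := mem1 δ h; exact V.pr1_lam01_iota1 ξ ψ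
  have K01 : ∀ (ξ ξ' : F0) (η η' : F1), V.pr0 ξ = V.pr0 ξ' → V.pr1 η = V.pr1 η' →
      V.pr1 (V.lam01 ξ η) = V.pr1 (V.lam01 ξ' η') := by
    intro ξ ξ' η η' h1 h2
    have e : V.lam01 ξ' η' = V.lam01 ξ η + (V.lam01 (ξ' - ξ) η' + V.lam01 ξ (η' - η)) := by
      simp only [map_sub, LinearMap.sub_apply]; abel
    rw [e, map_add, map_add, z01l (ξ' - ξ) η' (by rw [map_sub, h1, sub_self]),
      z01r ξ (η' - η) (by rw [map_sub, h2, sub_self]), add_zero, add_zero]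
  have z3a : ∀ (δ η ζ : F0), V.pr0 δ = 0 → V.pr1 (V.lam3 δ η ζ) = 0 := by
    intro δ η ζ h; obtain ⟨φ, rfl⟩ := mem0 δ h; exact V.pr1_lam3_iota φ η ζ
  have z3b : ∀ (ξ δ ζ : F0), V.pr0 δ = 0 → V.pr1 (V.lam3 ξ δ ζ) = 0 := by
    intro ξ δ ζ h; rw [V.lam3_skew12, map_neg, z3a _ _ _ h, neg_zero]
  have z3c : ∀ (ξ η δ : F0), V.pr0 δ = 0 → V.pr1 (V.lam3 ξ η δ) = 0 := by
    intro ξ η δ h; rw [V.lam3_skew23, map_neg, z3b _ _ _ h, neg_zero]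
  have K3 : ∀ (ξ ξ' η η' ζ ζ' : F0), V.pr0 ξ = V.pr0 ξ' → V.pr0 η = V.pr0 η' →
      V.pr0 ζ = V.pr0 ζ' → V.pr1 (V.lam3 ξ η ζ) = V.pr1 (V.lam3 ξ' η' ζ') := by
    intro ξ ξ' η η' ζ ζ' h1 h2 h3
    have e : V.lam3 ξ' η' ζ' = V.lam3 ξ η ζ +
        (V.lam3 (ξ' - ξ) η' ζ' + (V.lam3 ξ (η' - η) ζ' + V.lam3 ξ η (ζ' - ζ))) := by
      simp only [map_sub, LinearMap.sub_apply]; abel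
    rw [e, map_add, map_add, map_add,
      z3a (ξ' - ξ) η' ζ' (by rw [map_sub, h1, sub_self]),
      z3b ξ (η' - η) ζ' (by rw [map_sub, h2, sub_self]),
      z3c ξ η (ζ' - ζ) (by rw [map_sub, h3, sub_self])]
    simp
  -- "change of lift" lemmas
  have Q00 : ∀ ξ η : F0, V.pr0 (V.lam00 (s0 (V.pr0 ξ)) η) = V.pr0 (V.lam00 ξ η) :=
    fun ξ η => K00 _ _ _ _ (Hs0 _) rfl
  have Q01l : ∀ (ξ : F0) (η : F1),
      V.pr1 (V.lam01 (s0 (V.pr0 ξ)) η) = V.pr1 (V.lam01 ξ η) :=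
    fun ξ η => K01 _ _ _ _ (Hs0 _) rfl
  have Q01 : ∀ (ξ : F0) (η : F1),
      V.pr1 (V.lam01 ξ (s1 (V.pr1 η))) = V.pr1 (V.lam01 ξ η) :=
    fun ξ η => K01 _ _ _ _ rfl (Hs1 _)
  have Q3 : ∀ ξ η ζ : F0,
      V.pr1 (V.lam3 (s0 (V.pr0 ξ)) η ζ) = V.pr1 (V.lam3 ξ η ζ) :=
    fun ξ η ζ => K3 _ _ _ _ _ _ (Hs0 _) rfl rfl
  refine ⟨{ anchor := V.sideAnchor
            l1 := V.sidel1
            l20 := (V.lam00.compl₁₂ s0 s0).compr₂ (V.pr0.restrictScalars ℝ)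
            l21 := (V.lam01.compl₁₂ s0 s1).compr₂ (V.pr1.restrictScalars ℝ)
            l3 := { toFun := fun x =>
                      { toFun := fun y =>
                          { toFun := fun z => V.pr1 (V.lam3 (s0 x) (s0 y) (s0 z))
                            map_add' := by intro z w; simp [map_add]
                            map_smul' := by
                              intro f z
                              simp only [RingHom.id_apply]
                              rw [K3 (s0 x) (s0 x) (s0 y) (s0 y) (s0 (f • z)) (f • s0 z)
                                rfl rfl (by simp [Hs0, map_smul])]
                              simp [map_smul]
                          }
                        map_add' := by intro y y'; ext z; simp [map_add]
                        map_smul' := by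
                          intro f y
                          ext z
                          simp only [LinearMap.coe_mk, AddHom.coe_mk, RingHom.id_apply,
                            LinearMap.smul_apply]
                          rw [K3 (s0 x) (s0 x) (s0 (f • y)) (f • s0 y) (s0 z) (s0 z)
                            rfl (by simp [Hs0, map_smul]) rfl]
                          simp [map_smul]
                      }
                    map_add' := by intro x x'; ext y z; simp [map_add]
                    map_smul' := by
                      intro f x
                      ext y z
                      simp only [LinearMap.coe_mk, AddHom.coe_mk, RingHom.id_apply,
                        LinearMap.smul_apply]
                      rw [K3 (s0 (f • x)) (f • s0 x) (s0 y) (s0 y) (s0 z) (s0 z)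
                        (by simp [Hs0, map_smul]) rfl rfl]
                      simp [map_smul]
                  }
            l20_skew := ?_
            l3_skew12 := ?_
            l3_skew23 := ?_
            leib20 := ?_
            leib21 := ?_
            l21_smul_left := ?_
            anchor_l1 := V.sideAnchor_sidel1
            anchor_l20 := ?_
            l1_l21 := ?_
            l21_l1 := ?_
            jacobi := ?_
            jacobi1 := ?_
            coherence := ?_ }, rfl, rfl, ?_, ?_, ?_⟩ <;>
    simp only [LinearMap.compr₂_apply, LinearMap.compl₁₂_apply,
      LinearMap.coe_restrictScalars, LinearMap.coe_mk, AddHom.coe_mk]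
  · -- l20_skew
    intro x y
    rw [V.lam00_skew, map_neg]
  · -- l3_skew12
    intro x y z
    rw [V.lam3_skew12, map_neg]
  · -- l3_skew23
    intro x y z
    rw [V.lam3_skew23, map_neg]
  · -- leib20
    intro x y f
    rw [K00 (s0 x) (s0 x) (s0 (f • y)) (f • s0 y) rfl (by simp [Hs0, map_smul]),
      V.leib_lam00]
    simp [map_add, map_smul, Hs0]
  · -- leib21
    intro x a f
    rw [K01 (s0 x) (s0 x) (s1 (f • a)) (f • s1 a) rfl (by simp [Hs1, map_smul]),
      V.leib_lam01]
    simp [map_add, map_smul, Hs0, Hs1]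
  · -- l21_smul_left
    intro f x a
    rw [K01 (s0 (f • x)) (f • s0 x) (s1 a) (s1 a) (by simp [Hs0, map_smul]) rfl,
      V.lam01_smul_left]
    simp [map_smul]
  · -- anchor_l20
    intro x y
    rw [V.anchor_lam00, Hs0, Hs0]
  · -- l1_l21
    intro x a
    rw [← V.lhat1_pr, V.lhat1_lam01]
    exact K00 (s0 x) (s0 x) (V.lhat1 (s1 a)) (s0 (V.sidel1 a)) rfl
      (by rw [V.lhat1_pr, Hs1, Hs0])
  · -- l21_l1
    intro a b
    rw [K01 (s0 (V.sidel1 a)) (V.lhat1 (s1 a)) (s1 b) (s1 b)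
        (by rw [Hs0, V.lhat1_pr, Hs1]) rfl,
      V.lam01_lhat1, map_neg,
      K01 (V.lhat1 (s1 b)) (s0 (V.sidel1 b)) (s1 a) (s1 a)
        (by rw [Hs0, V.lhat1_pr, Hs1]) rfl]
  · -- jacobi
    intro x y z
    have h := congrArg V.pr0 (V.jacobi_fat (s0 x) (s0 y) (s0 z))
    rw [Q00 (V.lam00 (s0 x) (s0 y)) (s0 z), Q00 (V.lam00 (s0 y) (s0 z)) (s0 x),
      Q00 (V.lam00 (s0 z) (s0 x)) (s0 y), ← V.lhat1_pr]
    simpa only [map_add, map_neg] using h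
  · -- jacobi1
    intro x y a
    have h := congrArg V.pr1 (V.jacobi1_fat (s0 x) (s0 y) (s1 a))
    rw [Q01 (s0 x) (V.lam01 (s0 y) (s1 a)), Q01 (s0 y) (V.lam01 (s0 x) (s1 a)),
      Q01l (V.lam00 (s0 x) (s0 y)) (s1 a),
      K3 (s0 x) (s0 x) (s0 y) (s0 y) (s0 (V.sidel1 a)) (V.lhat1 (s1 a))
        rfl rfl (by rw [Hs0, V.lhat1_pr, Hs1])]
    simpa only [map_sub] using h
  · -- coherence
    intro x1 x2 x3 x4
    have h := congrArg V.pr1 (V.coherence_fat (s0 x1) (s0 x2) (s0 x3) (s0 x4))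
    rw [Q01 (s0 x1) (V.lam3 (s0 x2) (s0 x3) (s0 x4)),
      Q01 (s0 x2) (V.lam3 (s0 x1) (s0 x3) (s0 x4)),
      Q01 (s0 x3) (V.lam3 (s0 x1) (s0 x2) (s0 x4)),
      Q01 (s0 x4) (V.lam3 (s0 x1) (s0 x2) (s0 x3)),
      Q3 (V.lam00 (s0 x1) (s0 x2)) (s0 x3) (s0 x4),
      Q3 (V.lam00 (s0 x1) (s0 x3)) (s0 x2) (s0 x4),
      Q3 (V.lam00 (s0 x1) (s0 x4)) (s0 x2) (s0 x3),
      Q3 (V.lam00 (s0 x2) (s0 x3)) (s0 x1) (s0 x4),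
      Q3 (V.lam00 (s0 x2) (s0 x4)) (s0 x1) (s0 x3),
      Q3 (V.lam00 (s0 x3) (s0 x4)) (s0 x1) (s0 x2)]
    simpa only [map_sub, map_add] using h
  · -- pr0 of lam00 descends
    intro ξ1 ξ2
    exact K00 ξ1 (s0 (V.pr0 ξ1)) ξ2 (s0 (V.pr0 ξ2)) (Hs0 _).symm (Hs0 _).symm
  · intro ξ η
    exact K01 ξ (s0 (V.pr0 ξ)) η (s1 (V.pr1 η)) (Hs0 _).symm (Hs1 _).symm
  · intro ξ1 ξ2 ξ3
    exact K3 ξ1 (s0 (V.pr0 ξ1)) ξ2 (s0 (V.pr0 ξ2)) ξ3 (s0 (V.pr0 ξ3))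
      (Hs0 _).symm (Hs0 _).symm (Hs0 _).symm
end

section
/- Let (g_{-1}, g_0, l_1, l_2, l_3, S) be a quadratic Lie 2-algebra. Then (ℝ, g_{-1}, g_0, 𝔩_1, 𝔩_2, 𝔩_3, 𝔩_4) is a Lie 3-algebra (the higher analogue of the string Lie 2-algebra), where for x⁰, y⁰, z⁰, u⁰ ∈ g_0, x¹, y¹, z¹ ∈ g_{-1}, r ∈ ℝ: 𝔩_1(r) = 0 and 𝔩_1(x¹) = l_1(x¹); 𝔩_2(x⁰, y⁰) = l_2(x⁰, y⁰), 𝔩_2(x⁰, y¹) = l_2(x⁰, y¹), 𝔩_2(x⁰, r) = 0, 𝔩_2(x¹, y¹) = 0; 𝔩_3(x⁰, y⁰, z⁰) = l_3(x⁰, y⁰, z⁰), 𝔩_3(x⁰, y⁰, z¹) = ½ S(z¹, l_2(x⁰, y⁰)); 𝔩_4(x⁰, y⁰, z⁰, u⁰) = S(l_3(x⁰, y⁰, z⁰), u⁰). -/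
/-!  A Lie 3-algebra (3-term L∞-algebra) over `ℝ`.

A graded vector space `g₋₂ ⊕ g₋₁ ⊕ g₀` with graded skew-symmetric brackets
`l₁, l₂, l₃, l₄` of degrees `1, 0, -1, -2`, given here in components:
`d1 : g₋₁ → g₀`, `d2 : g₋₂ → g₋₁` (the components of `l₁`);
`b20, b21, b22, b11` (the components of `l₂` on `g₀×g₀`, `g₀×g₋₁`,
`g₀×g₋₂` and `g₋₁×g₋₁`; by graded skew-symmetry `l₂` is symmetric on
`g₋₁×g₋₁` and the remaining components vanish for degree reasons);
`b30 : ∧³g₀ → g₋₁`, `b31 : ∧²g₀ ⊗ g₋₁ → g₋₂` (the components of `l₃`);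
`b4 : ∧⁴g₀ → g₋₂` (the only component of `l₄`); subject to the higher
Jacobi identities of a 3-term L∞-algebra. -/
structure Lie3Algebra (g2 g1 g0 : Type*)
    [AddCommGroup g2] [Module ℝ g2] [AddCommGroup g1] [Module ℝ g1]
    [AddCommGroup g0] [Module ℝ g0] : Type _ where
  d1 : g1 →ₗ[ℝ] g0
  d2 : g2 →ₗ[ℝ] g1
  b20 : g0 →ₗ[ℝ] g0 →ₗ[ℝ] g0
  b21 : g0 →ₗ[ℝ] g1 →ₗ[ℝ] g1
  b22 : g0 →ₗ[ℝ] g2 →ₗ[ℝ] g2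
  b11 : g1 →ₗ[ℝ] g1 →ₗ[ℝ] g2
  b30 : g0 →ₗ[ℝ] g0 →ₗ[ℝ] g0 →ₗ[ℝ] g1
  b31 : g0 →ₗ[ℝ] g0 →ₗ[ℝ] g1 →ₗ[ℝ] g2
  b4 : g0 →ₗ[ℝ] g0 →ₗ[ℝ] g0 →ₗ[ℝ] g0 →ₗ[ℝ] g2
  b20_skew : ∀ x y, b20 x y = - b20 y x
  b11_symm : ∀ a b', b11 a b' = b11 b' a
  b30_skew12 : ∀ x y z, b30 x y z = - b30 y x z
  b30_skew23 : ∀ x y z, b30 x y z = - b30 x z y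
  b31_skew : ∀ x y a, b31 x y a = - b31 y x a
  b4_skew12 : ∀ x y z w, b4 x y z w = - b4 y x z w
  b4_skew23 : ∀ x y z w, b4 x y z w = - b4 x z y w
  b4_skew34 : ∀ x y z w, b4 x y z w = - b4 x y w z
  dd : ∀ u, d1 (d2 u) = 0
  d1_b21 : ∀ x a, d1 (b21 x a) = b20 x (d1 a)
  d2_b22 : ∀ x u, d2 (b22 x u) = b21 x (d2 u)
  d2_b11 : ∀ a b', d2 (b11 a b') = b21 (d1 a) b' + b21 (d1 b') a
  jac000 : ∀ x y z,
    b20 (b20 x y) z + b20 (b20 y z) x + b20 (b20 z x) y = - d1 (b30 x y z)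
  jac001 : ∀ x y a,
    b21 x (b21 y a) - b21 y (b21 x a) - b21 (b20 x y) a
      = b30 x y (d1 a) + d2 (b31 x y a)
  jac002 : ∀ x y u,
    b22 x (b22 y u) - b22 y (b22 x u) - b22 (b20 x y) u = b31 x y (d2 u)
  jac011 : ∀ x a b',
    b22 x (b11 a b') - b11 (b21 x a) b' - b11 a (b21 x b')
      = b31 x (d1 a) b' + b31 x (d1 b') a
  jac4_0 : ∀ x1 x2 x3 x4,
    b21 x1 (b30 x2 x3 x4) - b21 x2 (b30 x1 x3 x4) + b21 x3 (b30 x1 x2 x4)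
        - b21 x4 (b30 x1 x2 x3)
      - (b30 (b20 x1 x2) x3 x4 - b30 (b20 x1 x3) x2 x4 + b30 (b20 x1 x4) x2 x3
        + b30 (b20 x2 x3) x1 x4 - b30 (b20 x2 x4) x1 x3 + b30 (b20 x3 x4) x1 x2)
    = d2 (b4 x1 x2 x3 x4)
  jac4_1 : ∀ x y z a,
    b22 x (b31 y z a) + b22 y (b31 z x a) + b22 z (b31 x y a)
        - b11 (b30 x y z) a
      = b31 (b20 x y) z a + b31 (b20 y z) x a + b31 (b20 z x) y a
        + b31 y z (b21 x a) + b31 z x (b21 y a) + b31 x y (b21 z a)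
        + b4 x y z (d1 a)
  jac5 : ∀ x1 x2 x3 x4 x5,
    b22 x1 (b4 x2 x3 x4 x5) - b22 x2 (b4 x1 x3 x4 x5)
        + b22 x3 (b4 x1 x2 x4 x5) - b22 x4 (b4 x1 x2 x3 x5)
        + b22 x5 (b4 x1 x2 x3 x4)
      - b4 (b20 x1 x2) x3 x4 x5 + b4 (b20 x1 x3) x2 x4 x5
        - b4 (b20 x1 x4) x2 x3 x5 + b4 (b20 x1 x5) x2 x3 x4
        - b4 (b20 x2 x3) x1 x4 x5 + b4 (b20 x2 x4) x1 x3 x5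
        - b4 (b20 x2 x5) x1 x3 x4 - b4 (b20 x3 x4) x1 x2 x5
        + b4 (b20 x3 x5) x1 x2 x4 - b4 (b20 x4 x5) x1 x2 x3
      + b31 x4 x5 (b30 x1 x2 x3) - b31 x3 x5 (b30 x1 x2 x4)
        + b31 x3 x4 (b30 x1 x2 x5) + b31 x2 x5 (b30 x1 x3 x4)
        - b31 x2 x4 (b30 x1 x3 x5) + b31 x2 x3 (b30 x1 x4 x5)
        - b31 x1 x5 (b30 x2 x3 x4) + b31 x1 x4 (b30 x2 x3 x5)
        - b31 x1 x3 (b30 x2 x4 x5) + b31 x1 x2 (b30 x3 x4 x5)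
      = 0

/-!  A Lie 2-algebra (2-term L∞-algebra) over `ℝ`, in components:
`d : g₋₁ → g₀`, a skew bracket with components `b20 : g₀×g₀ → g₀` and
`b21 : g₀×g₋₁ → g₋₁`, and an alternating `b3 : ∧³g₀ → g₋₁`, satisfying
the 2-term higher Jacobi identities. -/
structure Lie2Algebra (g1 g0 : Type*)
    [AddCommGroup g1] [Module ℝ g1] [AddCommGroup g0] [Module ℝ g0] :
    Type _ where
  d : g1 →ₗ[ℝ] g0
  b20 : g0 →ₗ[ℝ] g0 →ₗ[ℝ] g0
  b21 : g0 →ₗ[ℝ] g1 →ₗ[ℝ] g1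
  b3 : g0 →ₗ[ℝ] g0 →ₗ[ℝ] g0 →ₗ[ℝ] g1
  b20_skew : ∀ x y, b20 x y = - b20 y x
  b3_skew12 : ∀ x y z, b3 x y z = - b3 y x z
  b3_skew23 : ∀ x y z, b3 x y z = - b3 x z y
  d_b21 : ∀ x a, d (b21 x a) = b20 x (d a)
  b21_d : ∀ a b', b21 (d a) b' = - b21 (d b') a
  jacobi : ∀ x y z,
    b20 (b20 x y) z + b20 (b20 y z) x + b20 (b20 z x) y = - d (b3 x y z)
  jacobi1 : ∀ x y a,
    b21 x (b21 y a) - b21 y (b21 x a) - b21 (b20 x y) a = b3 x y (d a)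
  coherence : ∀ x1 x2 x3 x4,
    b21 x1 (b3 x2 x3 x4) - b21 x2 (b3 x1 x3 x4) + b21 x3 (b3 x1 x2 x4)
      - b21 x4 (b3 x1 x2 x3)
    = b3 (b20 x1 x2) x3 x4 - b3 (b20 x1 x3) x2 x4 + b3 (b20 x1 x4) x2 x3
      + b3 (b20 x2 x3) x1 x4 - b3 (b20 x2 x4) x1 x3 + b3 (b20 x3 x4) x1 x2

/-- A quadratic Lie 2-algebra: a Lie 2-algebra with a degree 1 graded
symmetric nondegenerate bilinear form `S` (pairing `g₋₁` with `g₀`,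
inducing an isomorphism `g₋₁ ≅ g₀*`), satisfying the invariance conditions
`S(l₁x¹, y¹) = S(l₁y¹, x¹)`, `S(l₂(x⁰,y⁰), z¹) = −S(l₂(x⁰,z¹), y⁰)` and
`S(l₃(x⁰,y⁰,z⁰), u⁰) = −S(l₃(x⁰,y⁰,u⁰), z⁰)`. -/
structure QuadraticLie2Algebra (g1 g0 : Type*)
    [AddCommGroup g1] [Module ℝ g1] [AddCommGroup g0] [Module ℝ g0]
    extends Lie2Algebra g1 g0 : Type _ where
  /-- the pairing, written `S x⁰ y¹ = S(x⁰, y¹)` -/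
  S : g0 →ₗ[ℝ] g1 →ₗ[ℝ] ℝ
  S_nondeg0 : ∀ x : g0, (∀ a : g1, S x a = 0) → x = 0
  S_nondeg1 : ∀ a : g1, (∀ x : g0, S x a = 0) → a = 0
  inv1 : ∀ a b', S (d a) b' = S (d b') a
  inv2 : ∀ x y z', S (b20 x y) z' = - S y (b21 x z')
  inv3 : ∀ x y z u, S u (b3 x y z) = - S z (b3 x y u)

variable {g1 g0 : Type*}
  [AddCommGroup g1] [Module ℝ g1] [AddCommGroup g0] [Module ℝ g0]

/-- auxiliary: the component `𝔩₃(x⁰,y⁰,z¹) = ½ S(z¹, l₂(x⁰,y⁰))`. -/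
noncomputable def QuadraticLie2Algebra.B31 (Q : QuadraticLie2Algebra g1 g0) :
    g0 →ₗ[ℝ] g0 →ₗ[ℝ] g1 →ₗ[ℝ] ℝ :=
  (2⁻¹ : ℝ) • ((LinearMap.llcomp ℝ g0 g0 (g1 →ₗ[ℝ] ℝ) Q.S).comp Q.b20)

/-- auxiliary: the component `𝔩₄(x⁰,y⁰,z⁰,u⁰) = S(l₃(x⁰,y⁰,z⁰), u⁰)`. -/
noncomputable def QuadraticLie2Algebra.B4 (Q : QuadraticLie2Algebra g1 g0) :
    g0 →ₗ[ℝ] g0 →ₗ[ℝ] g0 →ₗ[ℝ] g0 →ₗ[ℝ] ℝ :=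
  (LinearMap.llcomp ℝ g0 (g0 →ₗ[ℝ] g1) (g0 →ₗ[ℝ] g0 →ₗ[ℝ] ℝ)
    (LinearMap.llcomp ℝ g0 g1 (g0 →ₗ[ℝ] ℝ) Q.S.flip)).comp Q.b3

lemma QuadraticLie2Algebra.B31_apply (Q : QuadraticLie2Algebra g1 g0)
    (x y : g0) (a : g1) : Q.B31 x y a = 2⁻¹ * Q.S (Q.b20 x y) a := rfl

lemma QuadraticLie2Algebra.B4_apply (Q : QuadraticLie2Algebra g1 g0)
    (x y z u : g0) : Q.B4 x y z u = Q.S u (Q.b3 x y z) := rfl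

lemma QuadraticLie2Algebra.S_b21 (Q : QuadraticLie2Algebra g1 g0)
    (x y : g0) (a : g1) : Q.S y (Q.b21 x a) = - Q.S (Q.b20 x y) a := by
  rw [Q.inv2, neg_neg]

lemma QuadraticLie2Algebra.S_b3_rot (Q : QuadraticLie2Algebra g1 g0)
    (w k l m : g0) : Q.S m (Q.b3 w k l) = - Q.S w (Q.b3 k l m) := by
  rw [Q.b3_skew12 w k l, Q.b3_skew23 k w l]
  simp [Q.inv3 k l w m]

/-- **Theorem (higher analogue of the string Lie 2-algebra).**
Let `(g₋₁, g₀, l₁, l₂, l₃, S)` be a quadratic Lie 2-algebra.  Then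
`(ℝ, g₋₁, g₀, 𝔩₁, 𝔩₂, 𝔩₃, 𝔩₄)` is a Lie 3-algebra, with
`𝔩₁(r) = 0`, `𝔩₁(x¹) = l₁(x¹)`,
`𝔩₂(x⁰,y⁰) = l₂(x⁰,y⁰)`, `𝔩₂(x⁰,y¹) = l₂(x⁰,y¹)`, `𝔩₂(x⁰,r) = 0`,
`𝔩₂(x¹,y¹) = 0`,
`𝔩₃(x⁰,y⁰,z⁰) = l₃(x⁰,y⁰,z⁰)`, `𝔩₃(x⁰,y⁰,z¹) = ½ S(z¹, l₂(x⁰,y⁰))`,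
`𝔩₄(x⁰,y⁰,z⁰,u⁰) = S(l₃(x⁰,y⁰,z⁰), u⁰)`. -/
theorem higher_string_Lie3Algebra (Q : QuadraticLie2Algebra g1 g0) :
    ∃ gg : Lie3Algebra ℝ g1 g0,
      (∀ r : ℝ, gg.d2 r = 0) ∧
      (∀ a : g1, gg.d1 a = Q.d a) ∧
      (∀ x y : g0, gg.b20 x y = Q.b20 x y) ∧
      (∀ (x : g0) (a : g1), gg.b21 x a = Q.b21 x a) ∧
      (∀ (x : g0) (r : ℝ), gg.b22 x r = 0) ∧
      (∀ a b' : g1, gg.b11 a b' = 0) ∧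
      (∀ x y z : g0, gg.b30 x y z = Q.b3 x y z) ∧
      (∀ (x y : g0) (a : g1),
        gg.b31 x y a = (2⁻¹ : ℝ) • Q.S (Q.b20 x y) a) ∧
      (∀ x y z u : g0, gg.b4 x y z u = Q.S u (Q.b3 x y z)) := by
  refine ⟨{
    d1 := Q.d
    d2 := 0
    b20 := Q.b20
    b21 := Q.b21
    b22 := 0
    b11 := 0
    b30 := Q.b3
    b31 := Q.B31
    b4 := Q.B4
    b20_skew := Q.b20_skew
    b11_symm := by intro a b'; rfl
    b30_skew12 := Q.b3_skew12
    b30_skew23 := Q.b3_skew23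
    b31_skew := by
      intro x y a
      have h := congrArg (fun v => Q.S v a) (Q.b20_skew x y)
      simp only [map_neg, LinearMap.neg_apply] at h
      simp only [QuadraticLie2Algebra.B31_apply]
      rw [h]; ring
    b4_skew12 := by
      intro x y z w
      have h := congrArg (fun v => Q.S w v) (Q.b3_skew12 x y z)
      simp only [map_neg] at h
      simp only [QuadraticLie2Algebra.B4_apply]
      rw [h]
    b4_skew23 := by
      intro x y z w
      have h := congrArg (fun v => Q.S w v) (Q.b3_skew23 x y z)
      simp only [map_neg] at h
      simp only [QuadraticLie2Algebra.B4_apply]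
      rw [h]
    b4_skew34 := by
      intro x y z w
      simp only [QuadraticLie2Algebra.B4_apply]
      exact Q.inv3 x y z w
    dd := by intro u; simp
    d1_b21 := Q.d_b21
    d2_b22 := by intro x u; simp
    d2_b11 := by
      intro a b'
      simp only [LinearMap.zero_apply, map_zero]
      rw [Q.b21_d a b']
      abel
    jac000 := Q.jacobi
    jac001 := by
      intro x y a
      simp only [LinearMap.zero_apply, map_zero, add_zero]
      exact Q.jacobi1 x y a
    jac002 := by intro x y u; simp
    jac011 := by
      intro x a b'
      simp only [LinearMap.zero_apply, map_zero, sub_zero, zero_sub, neg_zero,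
        QuadraticLie2Algebra.B31_apply]
      have f1 := congrArg (fun v => Q.S v b') (Q.d_b21 x a)
      have f2 := Q.inv1 (Q.b21 x a) b'
      have f3 := Q.inv2 x (Q.d b') a
      linarith
    jac4_0 := by
      intro x1 x2 x3 x4
      simp only [LinearMap.zero_apply, map_zero]
      rw [sub_eq_zero]
      exact Q.coherence x1 x2 x3 x4
    jac4_1 := by
      intro x y z a
      simp only [LinearMap.zero_apply, map_zero, zero_add, add_zero, zero_sub,
        neg_zero, QuadraticLie2Algebra.B31_apply, QuadraticLie2Algebra.B4_apply]
      have hj := congrArg (fun v => Q.S v a) (Q.jacobi x y z)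
      simp only [map_add, map_neg, LinearMap.add_apply, LinearMap.neg_apply] at hj
      have h1 := Q.inv1 (Q.b3 x y z) a
      have e1 := Q.inv2 x (Q.b20 y z) a
      have e2 := Q.inv2 y (Q.b20 z x) a
      have e3 := Q.inv2 z (Q.b20 x y) a
      have s1 := congrArg (fun v => Q.S v a) (Q.b20_skew x (Q.b20 y z))
      have s2 := congrArg (fun v => Q.S v a) (Q.b20_skew y (Q.b20 z x))
      have s3 := congrArg (fun v => Q.S v a) (Q.b20_skew z (Q.b20 x y))
      simp only [map_neg, LinearMap.neg_apply] at s1 s2 s3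
      linarith
    jac5 := by
      intro x1 x2 x3 x4 x5
      have h := congrArg (fun v => Q.S x5 v) (Q.coherence x1 x2 x3 x4)
      simp only [map_add, map_sub,
        Q.S_b21 x1 x5 (Q.b3 x2 x3 x4), Q.S_b21 x2 x5 (Q.b3 x1 x3 x4),
        Q.S_b21 x3 x5 (Q.b3 x1 x2 x4), Q.S_b21 x4 x5 (Q.b3 x1 x2 x3),
        Q.S_b3_rot (Q.b20 x1 x2) x3 x4 x5, Q.S_b3_rot (Q.b20 x1 x3) x2 x4 x5,
        Q.S_b3_rot (Q.b20 x1 x4) x2 x3 x5, Q.S_b3_rot (Q.b20 x2 x3) x1 x4 x5,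
        Q.S_b3_rot (Q.b20 x2 x4) x1 x3 x5, Q.S_b3_rot (Q.b20 x3 x4) x1 x2 x5] at h
      simp only [LinearMap.zero_apply, map_zero, zero_sub, add_zero, zero_add,
        neg_zero, sub_zero, QuadraticLie2Algebra.B31_apply,
        QuadraticLie2Algebra.B4_apply,
        Q.S_b3_rot (Q.b20 x1 x2) x3 x4 x5, Q.S_b3_rot (Q.b20 x1 x3) x2 x4 x5,
        Q.S_b3_rot (Q.b20 x1 x4) x2 x3 x5, Q.S_b3_rot (Q.b20 x1 x5) x2 x3 x4,
        Q.S_b3_rot (Q.b20 x2 x3) x1 x4 x5, Q.S_b3_rot (Q.b20 x2 x4) x1 x3 x5,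
        Q.S_b3_rot (Q.b20 x2 x5) x1 x3 x4, Q.S_b3_rot (Q.b20 x3 x4) x1 x2 x5,
        Q.S_b3_rot (Q.b20 x3 x5) x1 x2 x4, Q.S_b3_rot (Q.b20 x4 x5) x1 x2 x3]
      linarith
    }, ?_, ?_, ?_, ?_, ?_, ?_, ?_, ?_, ?_⟩
  · intro r; rfl
  · intro a; rfl
  · intro x y; rfl
  · intro x a; rfl
  · intro x r; rfl
  · intro a b'; rfl
  · intro x y z; rfl
  · intro x y a; rfl
  · intro x y z u; rfl
end
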